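/- arXiv:1712.07227 — 5 statements merged into one kernel-verified Lean document; each statement's English description precedes it below -/
import Mathlib

section
/- Let d ∈ ℝ and let ξ₁, ξ₂ be two real roots of the polynomial Q(ξ) = ξ³ − (3/2)ξ² + d with ξ₁ ≠ 1 and ξ₂ ≠ 1, satisfying the relation −ξ₂/(1−ξ₂) = 3ξ₁/(1−ξ₁). Then ξ₁ satisfies (ξ₁ − 1)(16ξ₁² − 4ξ₁ − 3) = 0. -/
/-! Two distinct roots of a monic cubic satisfy the quadratic obtained by dividing the difference
of the two root equations by `ξ₁ - ξ₂`. Clearing denominators in the relation gives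
`ξ₂ (4ξ₁ - 1) = 3ξ₁`; multiplying the quadratic by `2(4ξ₁ - 1)²` and substituting for
`ξ₂ (4ξ₁ - 1)` leaves `2ξ₁ (ξ₁ - 1)(16ξ₁² - 4ξ₁ - 3)`, and `ξ₁ = 0` would force `ξ₂ = 0 = ξ₁`. -/

theorem sq_add_mul_add_sq_add_eq_zero_of_isRoot_cubic {K : Type*} [Field K] {a b c x y : K}
    (hx : x ^ 3 + a * x ^ 2 + b * x + c = 0) (hy : y ^ 3 + a * y ^ 2 + b * y + c = 0)
    (hxy : x ≠ y) : x ^ 2 + x * y + y ^ 2 + a * (x + y) + b = 0 :=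
  mul_left_cancel₀ (sub_ne_zero.mpr hxy) (by linear_combination hx - hy)

theorem mul_four_mul_sub_one_eq_of_neg_div_eq_div {K : Type*} [Field K] {x y : K}
    (hx : x ≠ 1) (hy : y ≠ 1) (h : -y / (1 - y) = 3 * x / (1 - x)) :
    y * (4 * x - 1) = 3 * x := by
  rw [div_eq_div_iff (sub_ne_zero.mpr hy.symm) (sub_ne_zero.mpr hx.symm)] at h
  linear_combination h

theorem sub_one_mul_eq_zero_of_sq_add_mul_add_sq {K : Type*} [Field K] [NeZero (2 : K)] {x y : K}
    (hxy : x ≠ y) (hsym : 2 * (x ^ 2 + x * y + y ^ 2) = 3 * (x + y))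
    (hrel : y * (4 * x - 1) = 3 * x) :
    (x - 1) * (16 * x ^ 2 - 4 * x - 3) = 0 := by
  have hx : x ≠ 0 := by
    rintro rfl
    exact hxy (by linear_combination hrel)
  refine (mul_eq_zero.mp ?_).resolve_left (mul_ne_zero two_ne_zero hx)
  linear_combination (4 * x - 1) ^ 2 * hsym
    - (2 * y * (4 * x - 1) + 6 * x + (4 * x - 1) * (2 * x - 3)) * hrel

/-- If ξ₁, ξ₂ are two (distinct) real roots of Q(ξ) = ξ³ − (3/2)ξ² + d, neither equal to 1,
satisfying −ξ₂/(1−ξ₂) = 3ξ₁/(1−ξ₁), then (ξ₁ − 1)(16ξ₁² − 4ξ₁ − 3) = 0. -/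
theorem stmt_0 (d ξ₁ ξ₂ : ℝ)
    (hroot1 : ξ₁ ^ 3 - (3 / 2) * ξ₁ ^ 2 + d = 0)
    (hroot2 : ξ₂ ^ 3 - (3 / 2) * ξ₂ ^ 2 + d = 0)
    (hne : ξ₁ ≠ ξ₂)
    (h1 : ξ₁ ≠ 1) (h2 : ξ₂ ≠ 1)
    (hrel : -ξ₂ / (1 - ξ₂) = 3 * ξ₁ / (1 - ξ₁)) :
    (ξ₁ - 1) * (16 * ξ₁ ^ 2 - 4 * ξ₁ - 3) = 0 := by
  have hsym := sq_add_mul_add_sq_add_eq_zero_of_isRoot_cubic (a := -3 / 2) (b := 0) (c := d)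
    (by linear_combination hroot1) (by linear_combination hroot2) hne
  exact sub_one_mul_eq_zero_of_sq_add_mul_add_sq hne (by linear_combination 2 * hsym)
    (mul_four_mul_sub_one_eq_of_neg_div_eq_div h1 h2 hrel)
end

section
/- Let Q be a polynomial and λ, m real numbers with λ = m(m−2). Suppose h : [ξ₁, ξ₂] → ℝ is continuously differentiable, satisfies (Q(ξ) h'(ξ))' = m(m−2) ξ h(ξ) on [ξ₁, ξ₂], and Q(ξ₁) = Q(ξ₂) = 0. If Q(ξ) < 0 and ξ > 0 for all ξ ∈ (ξ₁, ξ₂), and h is not identically zero, then m(m−2) > 0 or h' ≡ 0 with m(m−2) = 0. -/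
/-!
Multiplying the equation by `h` gives `(Q h' h)' = m(m-2) ξ h² + Q h'²`; since `Q` vanishes at
both ends, integration yields `m(m-2) ∫ ξ h² = ∫ (-Q) h'²`. Both integrals are nonnegative, and a
weighted integral `∫ w g²` with continuous `w > 0` inside vanishes only if `g ≡ 0`. So
`m(m-2) < 0` forces `h ≡ 0`, and `m(m-2) = 0` forces `h' ≡ 0`.
-/

open MeasureTheory Set

section WeightedSquare

variable {w g : ℝ → ℝ} {a b : ℝ}

lemma ae_restrict_Ioc_of_forall_mem_Ioo {p : ℝ → Prop} (hp : ∀ x ∈ Ioo a b, p x) :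
    ∀ᵐ x ∂volume.restrict (Ioc a b), p x :=
  (ae_restrict_congr_set Ioo_ae_eq_Ioc).mp (ae_restrict_of_forall_mem measurableSet_Ioo hp)

lemma integral_weight_mul_sq_nonneg (hab : a ≤ b) (hw : ∀ x ∈ Ioo a b, 0 < w x) :
    0 ≤ ∫ x in a..b, w x * g x ^ 2 :=
  intervalIntegral.integral_nonneg_of_ae_restrict hab <|
    (ae_restrict_congr_set Ioo_ae_eq_Icc).mp <| ae_restrict_of_forall_mem measurableSet_Ioo
      fun x hx => mul_nonneg (hw x hx).le (sq_nonneg _)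

lemma eqOn_zero_of_integral_weight_mul_sq_eq_zero (hab : a < b)
    (hwc : ContinuousOn w (Icc a b)) (hw : ∀ x ∈ Ioo a b, 0 < w x)
    (hg : ContinuousOn g (Icc a b)) (h0 : ∫ x in a..b, w x * g x ^ 2 = 0) :
    EqOn g 0 (Icc a b) := by
  have hc : ContinuousOn (fun x => w x * g x ^ 2) (Icc a b) := hwc.mul (hg.pow 2)
  have hae : (fun x => w x * g x ^ 2) =ᵐ[volume.restrict (Ioc a b)] 0 :=
    (intervalIntegral.integral_eq_zero_iff_of_le_of_nonneg_ae hab.le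
      (ae_restrict_Ioc_of_forall_mem_Ioo fun x hx => mul_nonneg (hw x hx).le (sq_nonneg _))
      (hc.intervalIntegrable_of_Icc hab.le)).mp h0
  have hIoo : EqOn (fun x => w x * g x ^ 2) 0 (Ioo a b) :=
    Measure.eqOn_open_of_ae_eq (ae_restrict_of_ae_restrict_of_subset Ioo_subset_Ioc_self hae)
      isOpen_Ioo (hc.mono Ioo_subset_Icc_self) continuousOn_const
  refine EqOn.of_subset_closure (fun x hx => ?_) hg continuousOn_const Ioo_subset_Icc_self
    (closure_Ioo hab.ne).ge
  simpa [(hw x hx).ne'] using hIoo hx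

end WeightedSquare

theorem integral_mul_sq_eq_integral_neg_mul_deriv_sq {p q h h' : ℝ → ℝ} {a b : ℝ} (hab : a ≤ b)
    (hh : ∀ x ∈ Icc a b, HasDerivAt h (h' x) x) (hh' : ContinuousOn h' (Icc a b))
    (hq : ContinuousOn q (Icc a b))
    (hp : ∀ x ∈ Icc a b, HasDerivAt (fun x => p x * h' x) (q x * h x) x)
    (hpa : p a = 0) (hpb : p b = 0) :
    ∫ x in a..b, q x * h x ^ 2 = ∫ x in a..b, -p x * h' x ^ 2 := by
  have hhc : ContinuousOn h (Icc a b) := fun x hx => (hh x hx).continuousAt.continuousWithinAt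
  have hph' : ContinuousOn (fun x => p x * h' x) (Icc a b) :=
    fun x hx => (hp x hx).continuousAt.continuousWithinAt
  have hI₁ : IntervalIntegrable (fun x => q x * h x ^ 2) volume a b :=
    (hq.mul (hhc.pow 2)).intervalIntegrable_of_Icc hab
  have hI₂ : IntervalIntegrable (fun x => -p x * h' x ^ 2) volume a b :=
    ((hph'.mul hh').neg.congr fun x _ => by
      simp only [Pi.neg_apply, Pi.mul_apply]; ring).intervalIntegrable_of_Icc hab
  have hderiv : ∀ x ∈ uIcc a b, HasDerivAt (fun x => p x * h' x * h x)
      (q x * h x ^ 2 - -p x * h' x ^ 2) x := by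
    intro x hx
    rw [uIcc_of_le hab] at hx
    exact ((hp x hx).mul (hh x hx)).congr_deriv (by ring)
  have hftc := intervalIntegral.integral_eq_sub_of_hasDerivAt hderiv (hI₁.sub hI₂)
  rw [intervalIntegral.integral_sub hI₁ hI₂, hpa, hpb] at hftc
  linarith

/-- Sturm–Liouville positivity: if h is C¹ on [ξ₁, ξ₂] and solves
(Q h')' = m(m−2) ξ h with Q vanishing at the endpoints, Q < 0 and ξ > 0 inside,
and h not identically zero, then m(m−2) > 0, or h' ≡ 0 and m(m−2) = 0. -/
theorem stmt_9 (Q : Polynomial ℝ) (m ξ₁ ξ₂ : ℝ) (hlt : ξ₁ < ξ₂)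
    (h h' : ℝ → ℝ)
    (hderiv : ∀ ξ ∈ Set.Icc ξ₁ ξ₂, HasDerivAt h (h' ξ) ξ)
    (hcont : ContinuousOn h' (Set.Icc ξ₁ ξ₂))
    (heq : ∀ ξ ∈ Set.Icc ξ₁ ξ₂,
      HasDerivAt (fun x => Q.eval x * h' x) (m * (m - 2) * ξ * h ξ) ξ)
    (hQ1 : Q.eval ξ₁ = 0) (hQ2 : Q.eval ξ₂ = 0)
    (hQneg : ∀ ξ ∈ Set.Ioo ξ₁ ξ₂, Q.eval ξ < 0 ∧ 0 < ξ)
    (hnontriv : ¬ ∀ ξ ∈ Set.Icc ξ₁ ξ₂, h ξ = 0) :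
    m * (m - 2) > 0 ∨
      ((∀ ξ ∈ Set.Icc ξ₁ ξ₂, h' ξ = 0) ∧ m * (m - 2) = 0) := by
  set μ := m * (m - 2)
  have hpos : ∀ x ∈ Ioo ξ₁ ξ₂, 0 < x := fun x hx => (hQneg x hx).2
  have hQpos : ∀ x ∈ Ioo ξ₁ ξ₂, 0 < -Q.eval x := fun x hx => neg_pos.2 (hQneg x hx).1
  have hQc : ContinuousOn (fun x => -Q.eval x) (Icc ξ₁ ξ₂) := Q.continuousOn.neg
  have hhc : ContinuousOn h (Icc ξ₁ ξ₂) :=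
    fun x hx => (hderiv x hx).continuousAt.continuousWithinAt
  have henergy : μ * ∫ x in ξ₁..ξ₂, x * h x ^ 2 = ∫ x in ξ₁..ξ₂, -Q.eval x * h' x ^ 2 := by
    rw [← intervalIntegral.integral_const_mul]
    simp only [← mul_assoc]
    exact integral_mul_sq_eq_integral_neg_mul_deriv_sq hlt.le hderiv hcont
      (continuousOn_const.mul continuousOn_id) heq hQ1 hQ2
  have hI₁ := integral_weight_mul_sq_nonneg (g := h) hlt.le hpos
  have hI₂ := integral_weight_mul_sq_nonneg (g := h') hlt.le hQpos
  rcases lt_trichotomy μ 0 with hμ | hμ | hμ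
  · refine absurd (fun x hx => ?_) hnontriv
    refine eqOn_zero_of_integral_weight_mul_sq_eq_zero hlt (continuousOn_id' _) hpos hhc ?_ hx
    nlinarith
  · refine Or.inr ⟨fun x hx => ?_, hμ⟩
    refine eqOn_zero_of_integral_weight_mul_sq_eq_zero hlt hQc hQpos hcont ?_ hx
    rw [← henergy, hμ, zero_mul]
  · exact Or.inl hμ
end

section
/- Define sequences g_k = (k+1)((k+1)² − λ − 1)/(2k+3), f_k = t·k(k+1) − s·λ, j_k = k(k² − λ − 1)/(2k−1) with t = √13, s = (4+√13)/3, and 0 < λ < 3. Then for all integers k ≥ 2 and a = 1/2: f_k − a·j_k − (1/a)·g_k > 0. -/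
/-- The key coefficient inequality: with t = √13, s = (4+√13)/3, 0 < λ < 3 and a = 1/2,
for all integers k ≥ 2 one has f_k − a·j_k − (1/a)·g_k > 0. -/
theorem stmt_10 (lam : ℝ) (hlam0 : 0 < lam) (hlam3 : lam < 3) (k : ℕ) (hk : 2 ≤ k) :
    let t : ℝ := Real.sqrt 13
    let s : ℝ := (4 + Real.sqrt 13) / 3
    let g : ℝ := ((k : ℝ) + 1) * (((k : ℝ) + 1) ^ 2 - lam - 1) / (2 * (k : ℝ) + 3)
    let f : ℝ := t * (k : ℝ) * ((k : ℝ) + 1) - s * lam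
    let j : ℝ := (k : ℝ) * ((k : ℝ) ^ 2 - lam - 1) / (2 * (k : ℝ) - 1)
    let a : ℝ := 1 / 2
    f - a * j - (1 / a) * g > 0 := by
  intro t s g f j a
  have hx : (2:ℝ) ≤ (k:ℝ) := by exact_mod_cast hk
  set x : ℝ := (k:ℝ) with hxdef
  have h1 : (0:ℝ) < 2*x - 1 := by linarith
  have h2 : (0:ℝ) < 2*x + 3 := by linarith
  have hs1 : (3.6:ℝ) ≤ Real.sqrt 13 := by
    rw [show (3.6:ℝ) = Real.sqrt (3.6^2) from (Real.sqrt_sq (by norm_num)).symm]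
    exact Real.sqrt_le_sqrt (by norm_num)
  have hs2 : Real.sqrt 13 ≤ 3.61 := by
    rw [show (3.61:ℝ) = Real.sqrt (3.61^2) from (Real.sqrt_sq (by norm_num)).symm]
    exact Real.sqrt_le_sqrt (by norm_num)
  have hj : j ≤ (2/3) * x^2 := by
    show x * (x^2 - lam - 1) / (2*x - 1) ≤ (2/3) * x^2
    rw [div_le_iff₀ h1]
    nlinarith [mul_nonneg (sub_nonneg.2 hx) (sq_nonneg x), hlam0.le, hx]
  have hg : g ≤ (2/3) * (x+1)^2 := by
    show (x+1) * ((x+1)^2 - lam - 1) / (2*x + 3) ≤ (2/3) * (x+1)^2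
    rw [div_le_iff₀ h2]
    nlinarith [hlam0.le, hx, sq_nonneg (x+1)]
  have hf : 3.6 * x * (x+1) - 7.61 ≤ f := by
    show 3.6 * x * (x+1) - 7.61 ≤ Real.sqrt 13 * x * (x+1) - (4 + Real.sqrt 13)/3 * lam
    have hxx : (0:ℝ) ≤ x * (x+1) := by nlinarith
    have h3 : (4 + Real.sqrt 13)/3 * lam ≤ 7.61 := by nlinarith [Real.sqrt_nonneg 13]
    nlinarith [mul_le_mul_of_nonneg_right hs1 hxx]
  have ha : (a:ℝ) = 1/2 := rfl
  rw [ha]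
  have key : 3.6 * x * (x+1) - 7.61 - (1/2) * ((2/3)*x^2) - 2 * ((2/3)*(x+1)^2) > 0 := by
    nlinarith [sq_nonneg (x-2), mul_nonneg (sub_nonneg.2 hx) (sub_nonneg.2 hx)]
  nlinarith [hj, hg, hf, key]
end

section
/- Let t = √13, s = (4+√13)/3 and 0 < λ < 3. Define τ₀ = 0 and τ_{k+1} = g_k/(f_k − j_k τ_k), where g_k, f_k, j_k are as in the Legendre-expansion recurrence (g_k = (k+1)((k+1)²−λ−1)/(2k+3), f_k = t k(k+1) − sλ, j_k = k(k²−λ−1)/(2k−1)). Then for all k ≥ 2: 0 < τ_k < 1/2. -/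
/-- Key polynomial inequality: f_k - j_k/2 - 2 g_k > 0 for k ≥ 2 (cleared denominators). -/
lemma stmt_11_key (t x lam : ℝ) (ht2 : t^2 = 13) (ht : 3.6 < t) (hx : 2 ≤ x)
    (hlam0 : 0 < lam) (hlam3 : lam < 3) :
    2*(x+1)*((x+1)^2-lam-1)*(2*x-1) + (1/2)*(x*(x^2-lam-1))*(2*x+3)
      < (t*x*(x+1) - (4+t)/3*lam)*((2*x+3)*(2*x-1)) := by
  nlinarith [mul_nonneg (sub_nonneg.2 hx) (sub_nonneg.2 hx),
    mul_nonneg (mul_nonneg (sub_nonneg.2 hx) (sub_nonneg.2 hx)) (sub_nonneg.2 hx),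
    mul_nonneg (mul_nonneg (mul_nonneg (sub_nonneg.2 hx) (sub_nonneg.2 hx)) (sub_nonneg.2 hx)) (sub_nonneg.2 hx),
    mul_pos hlam0 (sub_pos.2 hlam3),
    mul_nonneg (mul_nonneg (sub_nonneg.2 hx) (sub_nonneg.2 hx)) (sub_pos.2 hlam3).le,
    mul_nonneg (sub_nonneg.2 hx) (sub_pos.2 hlam3).le,
    mul_nonneg (mul_nonneg (sub_nonneg.2 hx) (sub_nonneg.2 hx)) (sub_pos.2 ht).le,
    mul_nonneg (sub_nonneg.2 hx) (sub_pos.2 ht).le,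
    mul_nonneg (mul_nonneg (mul_nonneg (sub_nonneg.2 hx) (sub_nonneg.2 hx)) (sub_nonneg.2 hx)) (sub_pos.2 ht).le,
    sq_nonneg (x-2), hlam0.le]

/-- The ratio sequence τ of the Legendre-coefficient recurrence satisfies 0 < τ_k < 1/2
for all k ≥ 2, where t = √13, s = (4+√13)/3 and 0 < λ < 3. -/
theorem stmt_11 (lam : ℝ) (hlam0 : 0 < lam) (hlam3 : lam < 3)
    (τ : ℕ → ℝ)
    (g f j : ℕ → ℝ)
    (hg : ∀ k : ℕ, g k = ((k : ℝ) + 1) * (((k : ℝ) + 1) ^ 2 - lam - 1) / (2 * (k : ℝ) + 3))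
    (hf : ∀ k : ℕ, f k = Real.sqrt 13 * (k : ℝ) * ((k : ℝ) + 1) - ((4 + Real.sqrt 13) / 3) * lam)
    (hj : ∀ k : ℕ, j k = (k : ℝ) * ((k : ℝ) ^ 2 - lam - 1) / (2 * (k : ℝ) - 1))
    (hτ0 : τ 0 = 0)
    (hτrec : ∀ k : ℕ, τ (k + 1) = g k / (f k - j k * τ k)) :
    ∀ k : ℕ, 2 ≤ k → 0 < τ k ∧ τ k < 1 / 2 := by
  set t := Real.sqrt 13 with htdef
  have ht2 : t ^ 2 = 13 := Real.sq_sqrt (by norm_num)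
  have htn : 0 ≤ t := Real.sqrt_nonneg 13
  have ht : (3.6 : ℝ) < t := by nlinarith
  have h4t : (0:ℝ) < 4 + t := by linarith
  -- value of τ 1
  have hτ1 : τ 1 = 1 / (4 + t) := by
    have e := hτrec 0
    rw [hg 0, hf 0, hj 0, hτ0] at e
    push_cast at e
    rw [e]
    field_simp
    ring
  -- base case τ 2
  have hbase : 0 < τ 2 ∧ τ 2 < 1 / 2 := by
    have e := hτrec 1
    rw [hg 1, hf 1, hj 1, hτ1] at e
    push_cast at e
    -- g 1 = 2*(3-lam)/5, f 1 = 2t - (4+t)/3 lam, j 1 = -lam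
    have hu : (1:ℝ)/(4+t) * (4+t) = 1 := by field_simp
    have hgpos : (0:ℝ) < (1+1)*((1+1)^2 - lam - 1)/(2*1+3) := by nlinarith
    have hD2 : 1*(1^2-lam-1)/(2*1-1) * (1/(4+t)) + 2*((1+1)*((1+1)^2-lam-1)/(2*1+3))
        < t*1*(1+1) - (4+t)/3*lam := by
      rw [← sub_pos]
      have expand : t*1*(1+1) - (4+t)/3*lam - (1*(1^2-lam-1)/(2*1-1) * (1/(4+t)) + 2*((1+1)*((1+1)^2-lam-1)/(2*1+3)))
          = (30*t*(4+t) - 5*lam*(4+t)^2 + 15*lam - 12*(3-lam)*(4+t)) / (15*(4+t)) := by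
        field_simp
        ring
      rw [expand]
      apply div_pos _ (by positivity)
      nlinarith [mul_pos (sub_pos.2 hlam3) (show (0:ℝ) < 41 + 14*t by linarith)]
    have hDpos : (0:ℝ) < t*1*(1+1) - (4+t)/3*lam - 1*(1^2-lam-1)/(2*1-1) * (1/(4+t)) := by
      linarith
    constructor
    · rw [e]; positivity
    · rw [e, div_lt_iff₀ hDpos]; nlinarith
  -- inductive step
  intro k hk
  induction k, hk using Nat.le_induction with
  | base => exact hbase
  | succ n hn ih =>
    obtain ⟨ih0, ih2⟩ := ih
    have hx : (2:ℝ) ≤ (n:ℝ) := by exact_mod_cast hn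
    have ha : (0:ℝ) < 2*(n:ℝ) - 1 := by linarith
    have hb : (0:ℝ) < 2*(n:ℝ) + 3 := by linarith
    have hgpos : 0 < g n := by
      rw [hg n]; apply div_pos _ hb; nlinarith
    have hjpos : 0 < j n := by
      rw [hj n]; apply div_pos _ ha; nlinarith
    have hkey : 2 * g n + j n * (1/2) < f n := by
      rw [hg n, hf n, hj n]
      have e1 : 2 * (((n:ℝ)+1)*(((n:ℝ)+1)^2-lam-1)/(2*(n:ℝ)+3)) + (n:ℝ)*((n:ℝ)^2-lam-1)/(2*(n:ℝ)-1)*(1/2)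
          = (2*((n:ℝ)+1)*(((n:ℝ)+1)^2-lam-1)*(2*(n:ℝ)-1) + (1/2)*((n:ℝ)*((n:ℝ)^2-lam-1))*(2*(n:ℝ)+3))
            / ((2*(n:ℝ)+3)*(2*(n:ℝ)-1)) := by
        field_simp
      rw [e1, div_lt_iff₀ (by positivity)]
      exact stmt_11_key t (n:ℝ) lam ht2 ht hx hlam0 hlam3
    have hjτ : j n * τ n < j n * (1/2) := by
      exact mul_lt_mul_of_pos_left ih2 hjpos
    have hD : 2 * g n < f n - j n * τ n := by linarith
    have hDpos : 0 < f n - j n * τ n := by linarith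
    constructor
    · rw [hτrec n]; positivity
    · rw [hτrec n, div_lt_iff₀ hDpos]; linarith
end

section
/- With τ_k as above (the ratio sequence from the Legendre-coefficient recurrence with t = √13, s = (4+√13)/3, 0 < λ < 3), the coefficient sequence a_k (with a_k = a_{k−1}/τ_k) satisfies a_k/a_{k−1} > 2 for all k ≥ 2; hence |a_k| → ∞ and the Legendre series Σ a_k L_k(ξ) diverges at ξ = ±1. -/
/-!
The ratios τ_k = a_{k-1}/a_k obey τ_{k+1} = g_k / (f_k - j_k τ_k). For k ≥ 2 the coefficients
satisfy g_k, j_k > 0 and 2 g_k ≤ f_k - j_k / 2, so the denominator exceeds 2 g_k whenever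
0 < τ_k < 1/2, and the interval (0, 1/2) is invariant. Starting from τ_2 = 3/(5√13), every
ratio a_k/a_{k-1} exceeds 2, so |a_k| grows geometrically and the terms a_k L_k(±1) = ±a_k
do not tend to zero.
-/

open Filter Set Topology

lemma div_sub_mul_mem_Ioo {g f j τ : ℝ} (hg : 0 < g) (hj : 0 < j) (hgfj : 2 * g ≤ f - j / 2)
    (hτ : τ ∈ Ioo (0 : ℝ) (1 / 2)) : g / (f - j * τ) ∈ Ioo (0 : ℝ) (1 / 2) := by
  have hjτ : j * τ < j / 2 := by nlinarith [hτ.2]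
  have hD : 0 < f - j * τ := by linarith
  refine ⟨div_pos hg hD, ?_⟩
  rw [div_lt_iff₀ hD]
  linarith

lemma mem_Ioo_of_continued_fraction_rec {τ g f j : ℕ → ℝ} {m : ℕ}
    (hrec : ∀ k, τ (k + 1) = g k / (f k - j k * τ k))
    (hg : ∀ k ≥ m, 0 < g k) (hj : ∀ k ≥ m, 0 < j k) (hgfj : ∀ k ≥ m, 2 * g k ≤ f k - j k / 2)
    (hm : τ m ∈ Ioo (0 : ℝ) (1 / 2)) : ∀ k ≥ m, τ k ∈ Ioo (0 : ℝ) (1 / 2) := by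
  intro k hk
  induction k, hk using Nat.le_induction with
  | base => exact hm
  | succ k hk ih => rw [hrec]; exact div_sub_mul_mem_Ioo (hg k hk) (hj k hk) (hgfj k hk) ih

lemma tendsto_abs_atTop_of_le_abs_div {a : ℕ → ℝ} {c : ℝ} {m : ℕ} (hc : 1 < c) (ham : a m ≠ 0)
    (h : ∀ k ≥ m, c ≤ |a (k + 1) / a k|) : Tendsto (fun k => |a k|) atTop atTop := by
  rw [← tendsto_add_atTop_iff_nat m]
  refine tendsto_atTop_of_geom_le (by simpa using ham) hc fun n => ?_
  rw [add_right_comm]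
  rcases eq_or_ne (a (n + m)) 0 with h0 | h0
  · simp [h0]
  · calc c * |a (n + m)| ≤ |a (n + m + 1) / a (n + m)| * |a (n + m)| := by
          gcongr; exact h _ (Nat.le_add_left m n)
      _ = |a (n + m + 1)| := by rw [abs_div, div_mul_cancel₀ _ (abs_ne_zero.mpr h0)]

lemma not_summable_mul_pow_of_tendsto_abs_atTop {a : ℕ → ℝ} {c : ℝ} (hc : |c| = 1)
    (ha : Tendsto (fun k => |a k|) atTop atTop) : ¬ Summable (fun k => a k * c ^ k) := by
  intro hs
  have h0 : Tendsto (fun k => |a k * c ^ k|) atTop (𝓝 0) := by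
    simpa using hs.tendsto_atTop_zero.abs
  simp only [abs_mul, abs_pow, hc, one_pow, mul_one] at h0
  exact not_tendsto_atTop_of_tendsto_nhds h0 ha

namespace LegendreRecurrence

noncomputable def g (lam x : ℝ) : ℝ := (x + 1) * ((x + 1) ^ 2 - lam - 1) / (2 * x + 3)

noncomputable def f (lam x : ℝ) : ℝ := √13 * x * (x + 1) - (4 + √13) / 3 * lam

noncomputable def j (lam x : ℝ) : ℝ := x * (x ^ 2 - lam - 1) / (2 * x - 1)

variable {lam x : ℝ}

lemma g_pos (hlam : lam < 3) (hx : 2 ≤ x) : 0 < g lam x := by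
  unfold g
  apply div_pos <;> nlinarith

lemma j_pos (hlam : lam < 3) (hx : 2 ≤ x) : 0 < j lam x := by
  unfold j
  apply div_pos <;> nlinarith

lemma two_mul_g_le (hlam : lam ≤ 3) (hx : 2 ≤ x) : 2 * g lam x ≤ f lam x - j lam x / 2 := by
  obtain ⟨y, rfl⟩ : ∃ y, x = y + 2 := ⟨x - 2, by ring⟩
  have hy : 0 ≤ y := by linarith
  unfold f g j
  set t := √13
  have ht : 2 ≤ t := Real.le_sqrt_of_sq_le (by norm_num)
  -- the numerator, expanded around x = 2, is affine and decreasing in λ, with coefficients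
  -- positive for t ≥ 2
  have key : t * (y + 2) * (y + 2 + 1) - (4 + t) / 3 * lam
        - (y + 2) * ((y + 2) ^ 2 - lam - 1) / (2 * (y + 2) - 1) / 2
        - 2 * ((y + 2 + 1) * ((y + 2 + 1) ^ 2 - lam - 1) / (2 * (y + 2) + 3)) =
      ((3 - lam) * ((8 * t + 2) * y ^ 2 + (40 * t + 19) * y + (42 * t + 18))
        + 3 * ((8 * t - 10) * y ^ 4 + (80 * t - 103) * y ^ 3 + (282 * t - 382) * y ^ 2
          + (410 * t - 612) * y + (210 * t - 348))) / (6 * (2 * y + 7) * (2 * y + 3)) := by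
    rw [show 2 * (y + 2) - 1 = 2 * y + 3 by ring, show 2 * (y + 2) + 3 = 2 * y + 7 by ring]
    have h7 : 2 * y + 7 ≠ 0 := by linarith
    have h3 : 2 * y + 3 ≠ 0 := by linarith
    field_simp
    ring
  have hnum : 0 ≤ (3 - lam) * ((8 * t + 2) * y ^ 2 + (40 * t + 19) * y + (42 * t + 18))
        + 3 * ((8 * t - 10) * y ^ 4 + (80 * t - 103) * y ^ 3 + (282 * t - 382) * y ^ 2
          + (410 * t - 612) * y + (210 * t - 348)) := by
    have hc4 := mul_nonneg (by linarith : (0 : ℝ) ≤ 8 * t - 10) (pow_nonneg hy 4)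
    have hc3 := mul_nonneg (by linarith : (0 : ℝ) ≤ 80 * t - 103) (pow_nonneg hy 3)
    have hc2 := mul_nonneg (by linarith : (0 : ℝ) ≤ 282 * t - 382) (pow_nonneg hy 2)
    have hc1 := mul_nonneg (by linarith : (0 : ℝ) ≤ 410 * t - 612) hy
    have hA : 0 ≤ (8 * t + 2) * y ^ 2 + (40 * t + 19) * y + (42 * t + 18) := by positivity
    linarith [mul_nonneg (by linarith : (0 : ℝ) ≤ 3 - lam) hA]
  have := div_nonneg hnum (by positivity : (0 : ℝ) ≤ 6 * (2 * y + 7) * (2 * y + 3))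
  linarith

lemma ratio_two_eq (hlam0 : 0 < lam) (hlam3 : lam < 3) {τ : ℕ → ℝ} (hτ0 : τ 0 = 0)
    (hτrec : ∀ k : ℕ, τ (k + 1) = g lam k / (f lam k - j lam k * τ k)) :
    τ 2 = 3 / (5 * √13) := by
  have ht : √13 ^ 2 = 13 := Real.sq_sqrt (by norm_num)
  have ht0 : 0 < √13 := by positivity
  have hτ1 : τ 1 = 1 / (4 + √13) := by
    rw [hτrec, hτ0]
    unfold g f j
    field_simp
    ring
  have hden : f lam 1 - j lam 1 * τ 1 = 2 * √13 * (3 - lam) / 3 := by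
    rw [hτ1]
    unfold f j
    field_simp
    linear_combination lam * ht
  have h3 : 0 < 3 - lam := by linarith
  rw [hτrec, Nat.cast_one, hden, g, div_eq_div_iff (by positivity) (by positivity)]
  ring

end LegendreRecurrence

/-- If the Legendre coefficients a_k satisfy a_{k−1} = τ_k a_k with 0 < τ_k < 1/2 for k ≥ 2
(τ the ratio sequence of the recurrence with t = √13, s = (4+√13)/3, 0 < λ < 3),
then a_k/a_{k−1} > 2 for k ≥ 2, |a_k| → ∞, and the Legendre series diverges at ξ = ±1. -/
theorem stmt_12 (lam : ℝ) (hlam0 : 0 < lam) (hlam3 : lam < 3)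
    (τ : ℕ → ℝ) (a : ℕ → ℝ)
    (g f j : ℕ → ℝ)
    (hg : ∀ k : ℕ, g k = ((k : ℝ) + 1) * (((k : ℝ) + 1) ^ 2 - lam - 1) / (2 * (k : ℝ) + 3))
    (hf : ∀ k : ℕ, f k = Real.sqrt 13 * (k : ℝ) * ((k : ℝ) + 1) - ((4 + Real.sqrt 13) / 3) * lam)
    (hj : ∀ k : ℕ, j k = (k : ℝ) * ((k : ℝ) ^ 2 - lam - 1) / (2 * (k : ℝ) - 1))
    (hτ0 : τ 0 = 0)
    (hτrec : ∀ k : ℕ, τ (k + 1) = g k / (f k - j k * τ k))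
    (hane : ∀ k : ℕ, a k ≠ 0)
    (hτa : ∀ k : ℕ, 1 ≤ k → τ k = a (k - 1) / a k) :
    (∀ k : ℕ, 2 ≤ k → a k / a (k - 1) > 2) ∧
    Filter.Tendsto (fun k => |a k|) Filter.atTop Filter.atTop ∧
    ¬ Summable (fun k => a k * (1 : ℝ) ^ k) ∧
    ¬ Summable (fun k => a k * (-1 : ℝ) ^ k) := by
  obtain rfl : g = fun k : ℕ => LegendreRecurrence.g lam k := funext hg
  obtain rfl : f = fun k : ℕ => LegendreRecurrence.f lam k := funext hf
  obtain rfl : j = fun k : ℕ => LegendreRecurrence.j lam k := funext hj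
  have hτ : ∀ k ≥ 2, τ k ∈ Ioo (0 : ℝ) (1 / 2) := by
    have h2 : ∀ k : ℕ, k ≥ 2 → (2 : ℝ) ≤ k := fun k hk => by exact_mod_cast hk
    open LegendreRecurrence in
    refine mem_Ioo_of_continued_fraction_rec hτrec (fun k hk => g_pos hlam3 (h2 k hk))
      (fun k hk => j_pos hlam3 (h2 k hk)) (fun k hk => two_mul_g_le hlam3.le (h2 k hk)) ?_
    have ht : 2 < √13 := Real.lt_sqrt_of_sq_lt (by norm_num)
    rw [LegendreRecurrence.ratio_two_eq hlam0 hlam3 hτ0 hτrec]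
    constructor
    · positivity
    · rw [div_lt_iff₀ (by positivity)]; linarith
  have hratio : ∀ k : ℕ, 2 ≤ k → a k / a (k - 1) > 2 := by
    intro k hk
    obtain ⟨hpos, hlt⟩ := hτ k hk
    rw [hτa k (by omega)] at hpos hlt
    rw [← inv_div, gt_iff_lt, lt_inv_comm₀ two_pos hpos]
    simpa using hlt
  have hgrowth : Tendsto (fun k => |a k|) atTop atTop :=
    tendsto_abs_atTop_of_le_abs_div one_lt_two (hane 1)
      fun k hk => (hratio (k + 1) (by omega)).le.trans (le_abs_self _)
  exact ⟨hratio, hgrowth, not_summable_mul_pow_of_tendsto_abs_atTop (by simp) hgrowth,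
    not_summable_mul_pow_of_tendsto_abs_atTop (by simp) hgrowth⟩
end
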